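/- arXiv:1803.03912 — 2 statements merged into one kernel-verified Lean document; each statement's English description precedes it below -/
import Mathlib

section
/- Let F be a field, n ≥ 1, and let I be a nonzero monomial ideal of F[X_1,...,X_n] such that the quotient F[X_1,...,X_n]/I has finite dimension K ≥ 1 over F. Let G be the minimal monomial generating set of I, i.e., the set of exponent vectors a ∈ ℕⁿ such that the monomial X^a lies in I but X^a/X_i ∉ I for every index i with a_i > 0. Then |G| = (n−1)K + 1 if and only if K = 1 or n = 1. -/
open MvPolynomial

/-- An ideal of `F[X_1,…,X_n]` is a *monomial ideal* if it is generated by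
a set of monomials `X^a = X_1^{a_1} ⋯ X_n^{a_n}`. -/
def IsMonomialIdeal {n : ℕ} {F : Type} [Field F] (I : Ideal (MvPolynomial (Fin n) F)) : Prop :=
  ∃ S : Set (Fin n →₀ ℕ), I = Ideal.span ((fun a => (monomial a (1 : F))) '' S)


/-- The minimal monomial generating set of a monomial ideal \`I\`, described by exponent
vectors: those \`a\` with \`X^a ∈ I\` such that \`X^a / X_i ∉ I\` for every \`i\` with \`a_i > 0\`. -/
def minGenSet {n : ℕ} {F : Type} [Field F] (I : Ideal (MvPolynomial (Fin n) F)) :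
    Set (Fin n →₀ ℕ) :=
  {a | (monomial a (1 : F)) ∈ I ∧
    ∀ i, 0 < a i → (monomial (a - Finsupp.single i 1) (1 : F)) ∉ I}


/-! Let `S` be the set of exponents of the standard monomials (those not in `I`): a lower set of
size `K`, whose outer corners are the minimal generators `G`. Every nonzero element of `S` and
every corner is of the form `s + e_i` with `s ∈ S`, so `(K - 1) + |G| ≤ nK`, with equality exactly
when `(s, i) ↦ s + e_i` is injective on `S × [n]` and its image is `(S \ {0}) ∪ G`. For `K, n ≥ 2`
some `e_i` lies in `S`; taking `j ≠ i`, either `e_j ∈ S` and `(e_i, j)`, `(e_j, i)` collide, or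
`e_i + e_j` is hit but lies neither in `S` nor in `G`. For `S = {0}` or `n = 1` both conditions
hold. -/

open Set Finsupp

section OuterCorners

variable {ι : Type*}

def outerCorners (S : Set (ι →₀ ℕ)) : Set (ι →₀ ℕ) :=
  {a | a ∉ S ∧ ∀ i, 0 < a i → a - single i 1 ∈ S}

noncomputable def addSingle (p : (ι →₀ ℕ) × ι) : ι →₀ ℕ := p.1 + single p.2 1

variable {S : Set (ι →₀ ℕ)}

lemma mem_image_addSingle {a : ι →₀ ℕ} {i : ι} (hi : 0 < a i) (ha : a - single i 1 ∈ S) :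
    a ∈ addSingle '' (S ×ˢ univ) :=
  ⟨(a - single i 1, i), ⟨ha, trivial⟩, tsub_add_cancel_of_le (single_le_iff.2 hi)⟩

lemma Finsupp.exists_pos_of_ne_zero {a : ι →₀ ℕ} (ha : a ≠ 0) : ∃ i, 0 < a i := by
  obtain ⟨i, hi⟩ := Finsupp.ne_iff.1 ha
  exact ⟨i, Nat.pos_of_ne_zero hi⟩

lemma outerCorners_subset_image_addSingle (h0 : 0 ∈ S) :
    outerCorners S ⊆ addSingle '' (S ×ˢ univ) := by
  rintro a ⟨haS, hpred⟩
  obtain ⟨i, hi⟩ := exists_pos_of_ne_zero (ne_of_mem_of_not_mem h0 haS).symm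
  exact mem_image_addSingle hi (hpred i hi)

lemma diff_zero_subset_image_addSingle (hlow : IsLowerSet S) :
    S \ {0} ⊆ addSingle '' (S ×ˢ univ) := by
  rintro a ⟨haS, ha0⟩
  obtain ⟨i, hi⟩ := exists_pos_of_ne_zero ha0
  exact mem_image_addSingle hi (hlow tsub_le_self haS)

variable [Finite ι]

lemma finite_image_addSingle (hS : S.Finite) : (addSingle '' (S ×ˢ univ)).Finite :=
  (hS.prod finite_univ).image _

lemma ncard_diff_zero_union_outerCorners (hS : S.Finite) (h0 : 0 ∈ S) :
    (S \ {0} ∪ outerCorners S).ncard + 1 = (outerCorners S).ncard + S.ncard := by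
  have hdisj : Disjoint (S \ {0}) (outerCorners S) :=
    disjoint_left.2 fun _ ha hc => hc.1 ha.1
  rw [ncard_union_eq hdisj hS.sdiff
    ((finite_image_addSingle hS).subset (outerCorners_subset_image_addSingle h0)),
    add_right_comm, ncard_sdiff_singleton_add_one h0 hS, add_comm]

lemma ncard_outerCorners_add_ncard_eq (hS : S.Finite) (hlow : IsLowerSet S) (h0 : 0 ∈ S)
    (hinj : InjOn addSingle (S ×ˢ univ)) (hcov : addSingle '' (S ×ˢ univ) \ S ⊆ outerCorners S) :
    (outerCorners S).ncard + S.ncard = S.ncard * Nat.card ι + 1 := by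
  have hcover : addSingle '' (S ×ˢ univ) = S \ {0} ∪ outerCorners S := by
    refine (union_subset (diff_zero_subset_image_addSingle hlow)
      (outerCorners_subset_image_addSingle h0)).antisymm' fun a ha => ?_
    by_cases haS : a ∈ S
    · obtain ⟨p, -, rfl⟩ := ha
      exact Or.inl ⟨haS, by simp [addSingle]⟩
    · exact Or.inr (hcov ⟨ha, haS⟩)
  rw [← ncard_diff_zero_union_outerCorners hS h0, ← hcover, hinj.ncard_image, ncard_prod,
    ncard_univ]

lemma ncard_outerCorners_add_ncard_lt (hS : S.Finite) (hlow : IsLowerSet S) (hS1 : 1 < S.ncard)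
    (hι : Nat.card ι ≠ 1) :
    (outerCorners S).ncard + S.ncard < S.ncard * Nat.card ι + 1 := by
  have h0 : 0 ∈ S := hlow (zero_le (a := _)) (nonempty_of_ncard_ne_zero (by omega)).some_mem
  obtain ⟨t, htS, ht0⟩ := exists_ne_of_one_lt_ncard hS1 0
  obtain ⟨i, hi⟩ := exists_pos_of_ne_zero ht0
  have hiS : single i 1 ∈ S := hlow (single_le_iff.2 hi) htS
  have : Nontrivial ι := Finite.one_lt_card_iff_nontrivial.1 <| by
    have := Finite.card_pos_iff.2 ⟨i⟩; omega
  obtain ⟨j, hji⟩ := exists_ne i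
  have key : (S \ {0} ∪ outerCorners S).ncard < (S ×ˢ (univ : Set ι)).ncard := by
    have hsub := union_subset (diff_zero_subset_image_addSingle hlow)
      (outerCorners_subset_image_addSingle h0)
    have hV := finite_image_addSingle (ι := ι) hS
    by_cases hjS : single j 1 ∈ S
    · refine (ncard_le_ncard hsub hV).trans_lt <| (ncard_image_le (hS.prod finite_univ)).lt_of_ne
        fun h => hji ?_
      have hcollide := injOn_of_ncard_image_eq h (hS.prod finite_univ)
        (x₁ := (single i 1, j)) (x₂ := (single j 1, i)) ⟨hiS, trivial⟩ ⟨hjS, trivial⟩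
        (add_comm (single i 1) (single j 1))
      simpa using congrArg Prod.snd hcollide
    · refine (ncard_lt_ncard ((ssubset_iff_of_subset hsub).2 ⟨single i 1 + single j 1,
        ⟨(single i 1, j), ⟨hiS, trivial⟩, rfl⟩, ?_⟩) hV).trans_le
        (ncard_image_le (hS.prod finite_univ))
      rintro (⟨hij, -⟩ | ⟨-, hpred⟩)
      · exact hjS (hlow le_add_self hij)
      · exact hjS (by simpa using hpred i (by simp))
  rw [ncard_prod, ncard_univ] at key
  linarith [ncard_diff_zero_union_outerCorners hS h0]

lemma ncard_outerCorners_singleton_zero :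
    (outerCorners ({0} : Set (ι →₀ ℕ))).ncard = Nat.card ι := by
  have h := ncard_outerCorners_add_ncard_eq (S := {(0 : ι →₀ ℕ)}) (finite_singleton 0)
    (fun _ _ hba ha => nonpos_iff_eq_zero.1 (ha ▸ hba)) rfl ?_ ?_
  · simpa using h
  · rintro ⟨_, i⟩ ⟨rfl, -⟩ ⟨_, j⟩ ⟨rfl, -⟩ h
    exact Prod.ext rfl (single_left_injective one_ne_zero (by simpa [addSingle] using h))
  · rintro _ ⟨⟨⟨_, i⟩, ⟨rfl, -⟩, rfl⟩, hne⟩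
    refine ⟨hne, fun j hj => ?_⟩
    obtain rfl : i = j := by by_contra h; simp [addSingle, h] at hj
    simp [addSingle]

lemma ncard_outerCorners_add_ncard_of_subsingleton [Subsingleton ι] (hS : S.Finite)
    (hlow : IsLowerSet S) (hne : S.Nonempty) :
    (outerCorners S).ncard + S.ncard = S.ncard * Nat.card ι + 1 := by
  refine ncard_outerCorners_add_ncard_eq hS hlow (hlow (zero_le (a := _)) hne.some_mem) ?_ ?_
  · rintro ⟨s, i⟩ - ⟨t, j⟩ - h
    obtain rfl := Subsingleton.elim i j
    simpa [addSingle] using h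
  · rintro _ ⟨⟨⟨s, i⟩, ⟨hs, -⟩, rfl⟩, hnot⟩
    refine ⟨hnot, fun j _ => ?_⟩
    obtain rfl := Subsingleton.elim i j
    simpa [addSingle] using hs

theorem ncard_outerCorners_add_ncard_eq_iff (hS : S.Finite) (hlow : IsLowerSet S)
    (hne : S.Nonempty) :
    (outerCorners S).ncard + S.ncard = S.ncard * Nat.card ι + 1 ↔
      S.ncard = 1 ∨ Nat.card ι = 1 := by
  refine ⟨fun h => ?_, ?_⟩
  · by_contra! hcon
    have := (ncard_pos hS).2 hne
    have := ncard_outerCorners_add_ncard_lt hS hlow (by omega) hcon.2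
    omega
  · rintro (h1 | hι)
    · obtain ⟨a, rfl⟩ := ncard_eq_one.1 h1
      obtain rfl : a = 0 := (hlow (zero_le (a := a)) rfl).symm
      simp [ncard_outerCorners_singleton_zero]
    · have := (Finite.card_le_one_iff_subsingleton (α := ι)).1 hι.le
      exact ncard_outerCorners_add_ncard_of_subsingleton hS hlow hne

end OuterCorners

section StandardMonomials

variable {σ R : Type*}

lemma isLowerSet_setOf_monomial_notMem [CommSemiring R] (I : Ideal (MvPolynomial σ R)) :
    IsLowerSet {a | monomial a (1 : R) ∉ I} := fun a b hba ha hb =>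
  ha <| by simpa [monomial_mul, tsub_add_cancel_of_le hba] using
    I.mul_mem_left (monomial (a - b) (1 : R)) hb

lemma isCompl_restrictSupport_compl [CommSemiring R] (s : Set (σ →₀ ℕ)) :
    IsCompl (restrictSupport R s) (restrictSupport R sᶜ) := by
  have h : IsCompl (Finsupp.supported R R s) (Finsupp.supported R R sᶜ) :=
    ⟨Finsupp.disjoint_supported_supported disjoint_compl_right,
      Finsupp.codisjoint_supported_supported isCompl_compl.codisjoint⟩
  simp only [restrictSupport, AddMonoidAlgebra.supported, Submodule.comap_equiv_eq_map_symm]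
  exact h.map (Submodule.orderIsoMapComap (AddMonoidAlgebra.coeffLinearEquiv R).symm)

lemma finrank_quotient_eq_ncard [Field R] {I : Ideal (MvPolynomial σ R)}
    (hI : I.restrictScalars R = restrictSupport R {a | monomial a 1 ∈ I}) :
    Module.finrank R (MvPolynomial σ R ⧸ I) = {a | monomial a (1 : R) ∉ I}.ncard := by
  have e := (Submodule.Quotient.restrictScalarsEquiv R I).symm.trans
    (Submodule.quotientEquivOfIsCompl _ _ (hI ▸ isCompl_restrictSupport_compl _))
  rw [e.finrank_eq, Module.finrank_eq_nat_card_basis (basisRestrictSupport R _),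
    Nat.card_coe_set_eq]
  rfl

end StandardMonomials

lemma IsMonomialIdeal.restrictScalars_eq {n : ℕ} {F : Type} [Field F]
    {I : Ideal (MvPolynomial (Fin n) F)} (hI : IsMonomialIdeal I) :
    I.restrictScalars F = restrictSupport F {a | monomial a 1 ∈ I} := by
  obtain ⟨S, rfl⟩ := hI
  ext p
  simp [Set.subset_def, mem_restrictSupport_iff, mem_ideal_span_monomial_image]

lemma minGenSet_eq_outerCorners {n : ℕ} {F : Type} [Field F]
    (I : Ideal (MvPolynomial (Fin n) F)) :
    minGenSet I = outerCorners {a | monomial a (1 : F) ∉ I} := by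
  ext a
  simp [minGenSet, outerCorners]

theorem statement_7_general (F : Type) [Field F] (n K : ℕ) (hn : 1 ≤ n) (hK : 1 ≤ K)
    (I : Ideal (MvPolynomial (Fin n) F)) (hI : IsMonomialIdeal I)
    (hdim : Module.finrank F (MvPolynomial (Fin n) F ⧸ I) = K) :
    (minGenSet I).ncard = (n - 1) * K + 1 ↔ (K = 1 ∨ n = 1) := by
  set S := {a | monomial a (1 : F) ∉ I}
  have hSK : S.ncard = K := (finrank_quotient_eq_ncard hI.restrictScalars_eq).symm.trans hdim
  have hpos : 0 < S.ncard := hSK ▸ hK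
  have key := ncard_outerCorners_add_ncard_eq_iff (finite_of_ncard_pos hpos)
    (isLowerSet_setOf_monomial_notMem I) (nonempty_of_ncard_ne_zero hpos.ne')
  rw [← minGenSet_eq_outerCorners, hSK, Nat.card_eq_fintype_card, Fintype.card_fin] at key
  obtain ⟨m, rfl⟩ : ∃ m, n = m + 1 := ⟨n - 1, by omega⟩
  rw [← key, Nat.add_sub_cancel]
  constructor <;> intro h <;> linarith

/-- If `I` is a nonzero monomial ideal with `dim F[X]/I = K ≥ 1`, its minimal monomial
generating set `G` satisfies `|G| = (n-1)K + 1` if and only if `K = 1` or `n = 1`. -/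
theorem statement_7 (F : Type) [Field F] (n K : ℕ) (hn : 1 ≤ n) (hK : 1 ≤ K)
    (I : Ideal (MvPolynomial (Fin n) F)) (hI : IsMonomialIdeal I) (hne : I ≠ ⊥)
    (hdim : Module.finrank F (MvPolynomial (Fin n) F ⧸ I) = K) :
    (minGenSet I).ncard = (n - 1) * K + 1 ↔ (K = 1 ∨ n = 1) :=
  statement_7_general F n K hn hK I hI hdim
end

section
/- Let n ≥ 1, let q be a prime power, let T_1,...,T_n be positive integers, and let k and H be integers with 0 ≤ k ≤ T_1⋯T_n and H ≥ 0. Then the number of (T_1,...,T_n)-periodic sequences s : ℕⁿ → F_q with k-error linear complexity L_k(s) ≤ H is at most the number of (T_1,...,T_n)-periodic sequences σ with linear complexity L(σ) ≤ H, multiplied by q^k · binom(T_1⋯T_n, k). -/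
/-!
A periodic sequence is determined by its values on the period box `∏ [0, T_i)`, which has
`N = T_1 ⋯ T_n` points. If `L_k(s) ≤ H`, then `s` differs on at most `k` points of the box from
some periodic `σ` with `L(σ) ≤ H`, so the restriction of `s` to the box lies in the Hamming ball
of radius `k` around that of `σ`. Such a ball has at most `C(N, k) q^k` points: choose `k`
positions containing all the differences, then arbitrary values there.
-/

open MvPolynomial

/-- The value at `m` of the sequence `P·s`, i.e. `∑_j a_j s(m+j)` where `P = ∑_j a_j X^j`. -/
def recSum {n : ℕ} {F : Type} [Field F] (s : (Fin n → ℕ) → F)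
    (P : MvPolynomial (Fin n) F) (m : Fin n → ℕ) : F :=
  ∑ j ∈ P.support, P.coeff j * s (fun i => m i + j i)

lemma recSum_superset {n : ℕ} {F : Type} [Field F] (s : (Fin n → ℕ) → F)
    (P : MvPolynomial (Fin n) F) (m : Fin n → ℕ) {T : Finset (Fin n →₀ ℕ)}
    (hT : P.support ⊆ T) :
    ∑ j ∈ T, P.coeff j * s (fun i => m i + j i) = recSum s P m := by
  refine (Finset.sum_subset hT ?_).symm
  intro j _ hj
  rw [MvPolynomial.notMem_support_iff.mp hj, zero_mul]

/-- `I(s)`: the ideal of all polynomials `P = ∑_j a_j X^j` such that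
`∑_j a_j s(m + j) = 0` for all `m`, i.e. of all linear recurrences satisfied by `s`. -/
def seqIdeal {n : ℕ} {F : Type} [Field F] (s : (Fin n → ℕ) → F) :
    Ideal (MvPolynomial (Fin n) F) where
  carrier := {P | ∀ m, recSum s P m = 0}
  zero_mem' := by intro m; simp [recSum]
  add_mem' := by
    intro P Q hP hQ m
    have h : recSum s (P + Q) m
        = ∑ j ∈ P.support ∪ Q.support, (P + Q).coeff j * s (fun i => m i + j i) :=
      (recSum_superset s (P + Q) m (MvPolynomial.support_add)).symm
    rw [h]
    simp only [MvPolynomial.coeff_add, add_mul]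
    rw [Finset.sum_add_distrib,
      recSum_superset s P m Finset.subset_union_left,
      recSum_superset s Q m Finset.subset_union_right, hP m, hQ m, add_zero]
  smul_mem' := by
    intro c P hP
    simp only [smul_eq_mul, Set.mem_setOf_eq] at *
    induction c using MvPolynomial.induction_on generalizing P with
    | C a =>
      intro m
      have hsupp : (C a * P).support ⊆ P.support := by
        rw [← MvPolynomial.smul_eq_C_mul]
        exact Finsupp.support_smul
      rw [← recSum_superset s (C a * P) m hsupp]
      have : ∀ j ∈ P.support, (C a * P).coeff j * s (fun i => m i + j i)
          = a * (P.coeff j * s (fun i => m i + j i)) := by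
        intro j _
        rw [MvPolynomial.coeff_C_mul, mul_assoc]
      rw [Finset.sum_congr rfl this, ← Finset.mul_sum]
      rw [recSum_superset s P m (le_refl _)]
      rw [hP m, mul_zero]
    | add p q hp hq =>
      intro m
      rw [add_mul]
      have h1 := hp hP
      have h2 := hq hP
      have h : recSum s (p * P + q * P) m
          = ∑ j ∈ (p * P).support ∪ (q * P).support,
            (p * P + q * P).coeff j * s (fun i => m i + j i) :=
        (recSum_superset s _ m (MvPolynomial.support_add)).symm
      rw [h]
      simp only [MvPolynomial.coeff_add, add_mul]
      rw [Finset.sum_add_distrib,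
        recSum_superset s _ m Finset.subset_union_left,
        recSum_superset s _ m Finset.subset_union_right, h1 m, h2 m, add_zero]
    | mul_X p i hp =>
      intro m
      rw [mul_assoc]
      have hX : ∀ m', recSum s (X i * P) m' = 0 := by
        intro m'
        unfold recSum
        rw [MvPolynomial.support_X_mul, Finset.sum_map]
        have : ∀ j ∈ P.support,
            (X i * P).coeff (addLeftEmbedding (Finsupp.single i 1) j)
              * s (fun t => m' t + (addLeftEmbedding (Finsupp.single i 1) j) t)
            = P.coeff j * s (fun t => (m' t + Finsupp.single i 1 t) + j t) := by
          intro j _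
          rw [addLeftEmbedding_apply, MvPolynomial.coeff_X_mul]
          have harg : (fun t => m' t + ((Finsupp.single i 1 + j : Fin n →₀ ℕ)) t)
              = fun t => (m' t + Finsupp.single i 1 t) + j t := by
            funext t; rw [Finsupp.add_apply]; ring
          rw [harg]
        rw [Finset.sum_congr rfl this]
        have := hP (fun t => m' t + Finsupp.single i 1 t)
        unfold recSum at this
        exact this
      exact hp hX m

/-- The linear complexity `L(s)`: the dimension of `F[X_1,…,X_n]/I(s)` over `F`. -/
noncomputable def linComp {n : ℕ} {F : Type} [Field F] (s : (Fin n → ℕ) → F) : ℕ :=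
  Module.finrank F (MvPolynomial (Fin n) F ⧸ seqIdeal s)

/-- `s` is periodic with period `(T_1,…,T_n)` if `X_i^{T_i} - 1 ∈ I(s)` for all `i`. -/
def IsPeriodic {n : ℕ} {F : Type} [Field F] (T : Fin n → ℕ) (s : (Fin n → ℕ) → F) : Prop :=
  ∀ i, (X i : MvPolynomial (Fin n) F) ^ T i - 1 ∈ seqIdeal s

/-- The `k`-error linear complexity `L_k(s)` of a `(T_1,…,T_n)`-periodic sequence `s`:
the minimum of `L(σ)` over all `(T_1,…,T_n)`-periodic sequences `σ` differing from `s`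
in at most `k` positions of the box `{m : 0 ≤ m_i ≤ T_i - 1}`. -/
noncomputable def errComp {n : ℕ} {F : Type} [Field F] (T : Fin n → ℕ) (k : ℕ)
    (s : (Fin n → ℕ) → F) : ℕ :=
  sInf {K | ∃ σ : (Fin n → ℕ) → F, IsPeriodic T σ ∧
    ({m : Fin n → ℕ | (∀ i, m i < T i) ∧ σ m ≠ s m}).ncard ≤ k ∧ linComp σ = K}

open Finset

theorem card_filter_hammingDist_le {ι β : Type*} [Fintype ι] [DecidableEq ι] [Fintype β]
    [DecidableEq β] (x : ι → β) {k : ℕ} (hk : k ≤ Fintype.card ι) :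
    #{y | hammingDist x y ≤ k} ≤ (Fintype.card ι).choose k * Fintype.card β ^ k := by
  let patch (A : Finset ι) (v : A → β) : ι → β := fun i => if h : i ∈ A then v ⟨i, h⟩ else x i
  have hcover : ({y | hammingDist x y ≤ k} : Finset (ι → β)) ⊆
      (univ.powersetCard k).biUnion fun A => univ.image (patch A) := by
    intro y hy
    obtain ⟨A, hdiff, -, hA⟩ := exists_subsuperset_card_eq (subset_univ {i | x i ≠ y i})
      (mem_filter.1 hy).2 (by rwa [card_univ])
    refine mem_biUnion.2 ⟨A, mem_powersetCard.2 ⟨subset_univ A, hA⟩,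
      mem_image.2 ⟨fun i => y i, mem_univ _, funext fun i => ?_⟩⟩
    by_cases hi : i ∈ A
    · simp [patch, hi]
    · have hxy : x i = y i := by
        by_contra h
        exact hi (hdiff (by simpa using h))
      simp [patch, hi, hxy]
  calc #{y | hammingDist x y ≤ k}
      ≤ #((univ.powersetCard k).biUnion fun A => univ.image (patch A)) := card_le_card hcover
    _ ≤ #(univ.powersetCard k) * Fintype.card β ^ k := by
      refine card_biUnion_le_card_mul _ _ _ fun A hA => card_image_le.trans ?_
      rw [card_univ, Fintype.card_fun, Fintype.card_coe, (mem_powersetCard.1 hA).2]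
    _ = (Fintype.card ι).choose k * Fintype.card β ^ k := by rw [card_powersetCard, card_univ]

section PeriodBox

variable {n : ℕ} {T : Fin n → ℕ}

variable (T) in
def periodBox : Finset (Fin n → ℕ) := Fintype.piFinset fun i => range (T i)

theorem mem_periodBox {m : Fin n → ℕ} : m ∈ periodBox T ↔ ∀ i, m i < T i := by simp [periodBox]

theorem card_periodBox : #(periodBox T) = ∏ i, T i := by simp [periodBox]

variable (T) in
def restrictBox {F : Type*} (s : (Fin n → ℕ) → F) : periodBox T → F := fun m => s m

theorem ncard_setOf_ne_eq_hammingDist {F : Type*} [DecidableEq F] (σ s : (Fin n → ℕ) → F) :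
    {m : Fin n → ℕ | (∀ i, m i < T i) ∧ σ m ≠ s m}.ncard
      = hammingDist (restrictBox T σ) (restrictBox T s) := by
  rw [hammingDist, ← Set.ncard_coe_finset, ← Set.ncard_image_of_injective _ Subtype.val_injective]
  congr 1
  ext m
  constructor
  · rintro ⟨hm, hne⟩
    exact ⟨⟨m, mem_periodBox.2 hm⟩, mem_filter.2 ⟨mem_univ _, hne⟩, rfl⟩
  · rintro ⟨⟨m, hm⟩, hne, rfl⟩
    exact ⟨mem_periodBox.1 hm, (mem_filter.1 hne).2⟩

end PeriodBox

section Periodic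

variable {n : ℕ} {F : Type} [Field F] {T : Fin n → ℕ} {s : (Fin n → ℕ) → F}

theorem recSum_sub (s : (Fin n → ℕ) → F) (P Q : MvPolynomial (Fin n) F) (m : Fin n → ℕ) :
    recSum s (P - Q) m = recSum s P m - recSum s Q m := by
  classical
  rw [← recSum_superset s (P - Q) m (support_sub _ P Q),
    ← recSum_superset s P m subset_union_left,
    ← recSum_superset s Q m subset_union_right, ← sum_sub_distrib]
  exact sum_congr rfl fun j _ => by rw [coeff_sub, sub_mul]

theorem recSum_monomial (s : (Fin n → ℕ) → F) (d : Fin n →₀ ℕ) (a : F) (m : Fin n → ℕ) :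
    recSum s (monomial d a) m = a * s (m + d) := by
  classical
  by_cases ha : a = 0
  · simp [recSum, ha]
  · rw [recSum, support_monomial, if_neg ha, sum_singleton, coeff_monomial, if_pos rfl]
    rfl

theorem IsPeriodic.apply_add_single (hs : IsPeriodic T s) (i : Fin n) (m : Fin n → ℕ) :
    s (m + Pi.single i (T i)) = s m := by
  have h := hs i m
  rw [recSum_sub, X_pow_eq_monomial, ← C_1, ← monomial_zero', recSum_monomial,
    recSum_monomial, Finsupp.coe_zero, add_zero, one_mul, one_mul, sub_eq_zero,
    Finsupp.single_eq_pi_single] at h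
  exact h

theorem IsPeriodic.apply_add_single_mul (hs : IsPeriodic T s) (i : Fin n) (m : Fin n → ℕ)
    (c : ℕ) : s (m + Pi.single i (T i * c)) = s m := by
  induction c with
  | zero => simp
  | succ c ih => rw [mul_add_one, Pi.single_add, ← add_assoc, hs.apply_add_single, ih]

theorem IsPeriodic.apply_add_mul (hs : IsPeriodic T s) (m c : Fin n → ℕ) :
    s (m + fun i => T i * c i) = s m := by
  classical
  suffices h : ∀ I : Finset (Fin n), s (m + ∑ i ∈ I, Pi.single i (T i * c i)) = s m by
    simpa only [univ_sum_single] using h univ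
  intro I
  induction I using Finset.induction_on with
  | empty => simp
  | insert i I hi ih => rw [sum_insert hi, add_left_comm, add_comm, hs.apply_add_single_mul, ih]

theorem IsPeriodic.apply_mod (hs : IsPeriodic T s) (m : Fin n → ℕ) :
    s (fun i => m i % T i) = s m := by
  conv_rhs => rw [show m = (fun i => m i % T i) + fun i => T i * (m i / T i) from
    funext fun i => (Nat.mod_add_div (m i) (T i)).symm]
  rw [hs.apply_add_mul]

theorem IsPeriodic.ext (hT : ∀ i, 0 < T i) {s' : (Fin n → ℕ) → F} (hs : IsPeriodic T s)
    (hs' : IsPeriodic T s') (h : ∀ m : Fin n → ℕ, (∀ i, m i < T i) → s m = s' m) : s = s' :=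
  funext fun m => by
    rw [← hs.apply_mod, ← hs'.apply_mod, h _ fun i => Nat.mod_lt _ (hT i)]

theorem exists_isPeriodic_of_errComp_le {k H : ℕ} (hs : IsPeriodic T s)
    (h : errComp T k s ≤ H) : ∃ σ, IsPeriodic T σ ∧
      {m : Fin n → ℕ | (∀ i, m i < T i) ∧ σ m ≠ s m}.ncard ≤ k ∧ linComp σ ≤ H := by
  obtain ⟨σ, hσ, hdiff, hL⟩ := Nat.sInf_mem (s := {K | ∃ σ : (Fin n → ℕ) → F, IsPeriodic T σ ∧
    ({m : Fin n → ℕ | (∀ i, m i < T i) ∧ σ m ≠ s m}).ncard ≤ k ∧ linComp σ = K})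
    ⟨linComp s, s, hs, by simp, rfl⟩
  exact ⟨σ, hσ, hdiff, hL ▸ h⟩

theorem injOn_restrictBox (hT : ∀ i, 0 < T i) :
    Set.InjOn (restrictBox T) {s : (Fin n → ℕ) → F | IsPeriodic T s} :=
  fun _ hs _ hs' h => hs.ext hT hs' fun m hm => congrFun h ⟨m, mem_periodBox.2 hm⟩

theorem finite_setOf_isPeriodic [Finite F] (hT : ∀ i, 0 < T i) :
    {s : (Fin n → ℕ) → F | IsPeriodic T s}.Finite :=
  Set.Finite.of_finite_image (Set.toFinite _) (injOn_restrictBox hT)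

end Periodic

theorem statement_17_general {n : ℕ} {F : Type} [Field F] [Fintype F]
    (q : ℕ) (hq : Fintype.card F = q)
    (T : Fin n → ℕ) (hT : ∀ i, 0 < T i) (k H : ℕ) (hk : k ≤ ∏ i, T i) :
    {s : (Fin n → ℕ) → F | IsPeriodic T s ∧ errComp T k s ≤ H}.ncard
      ≤ {σ : (Fin n → ℕ) → F | IsPeriodic T σ ∧ linComp σ ≤ H}.ncard
        * (q ^ k * (∏ i, T i).choose k) := by
  classical
  set S := {s : (Fin n → ℕ) → F | IsPeriodic T s ∧ errComp T k s ≤ H}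
  set B := {σ : (Fin n → ℕ) → F | IsPeriodic T σ ∧ linComp σ ≤ H}
  have hB : B.Finite := (finite_setOf_isPeriodic hT).subset fun _ h => h.1
  let ball (σ : (Fin n → ℕ) → F) : Finset (periodBox T → F) :=
    {y | hammingDist (restrictBox T σ) y ≤ k}
  have hcover : restrictBox T '' S ⊆ ↑(hB.toFinset.biUnion ball) := by
    rintro _ ⟨s, ⟨hs, hsk⟩, rfl⟩
    obtain ⟨σ, hσ, hdiff, hL⟩ := exists_isPeriodic_of_errComp_le hs hsk
    rw [ncard_setOf_ne_eq_hammingDist] at hdiff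
    simpa [ball] using ⟨σ, ⟨hσ, hL⟩, hdiff⟩
  have hball : ∀ σ ∈ hB.toFinset, #(ball σ) ≤ (∏ i, T i).choose k * q ^ k := fun σ _ => by
    have := card_filter_hammingDist_le (restrictBox T σ)
      (k := k) (by rwa [Fintype.card_coe, card_periodBox])
    rwa [Fintype.card_coe, card_periodBox, hq] at this
  calc S.ncard = (restrictBox T '' S).ncard :=
        ((injOn_restrictBox hT).mono fun _ h => h.1).ncard_image.symm
    _ ≤ #(hB.toFinset.biUnion ball) := by
        simpa only [Set.ncard_coe_finset] using Set.ncard_le_ncard hcover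
    _ ≤ #hB.toFinset * ((∏ i, T i).choose k * q ^ k) := card_biUnion_le_card_mul _ _ _ hball
    _ = B.ncard * (q ^ k * (∏ i, T i).choose k) := by
        rw [Set.ncard_eq_toFinset_card B hB, mul_comm (Nat.choose _ _)]

/-- The number of `(T_1,…,T_n)`-periodic sequences with `k`-error linear complexity at most
`H` is at most the number of `(T_1,…,T_n)`-periodic sequences with linear complexity at most
`H`, multiplied by `q^k · C(T_1 ⋯ T_n, k)`. -/
theorem statement_17 {n : ℕ} (hn : 1 ≤ n) {F : Type} [Field F] [Fintype F]
    (q : ℕ) (hq : Fintype.card F = q)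
    (T : Fin n → ℕ) (hT : ∀ i, 0 < T i) (k H : ℕ) (hk : k ≤ ∏ i, T i) :
    {s : (Fin n → ℕ) → F | IsPeriodic T s ∧ errComp T k s ≤ H}.ncard
      ≤ {σ : (Fin n → ℕ) → F | IsPeriodic T σ ∧ linComp σ ≤ H}.ncard
        * (q ^ k * (∏ i, T i).choose k) :=
  statement_17_general q hq T hT k H hk
end
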